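/- Propagation of the isothermal gauge constraints: let c: ℝ → ℝ² be C¹ and v: ℝ → ℝ² continuous, with ⟨ċ(s), v(s)⟩ = 0 and |ċ(s)|² + |v(s)|² = 1 for all s, and define γ(s,t) = (1/2)( c(s+t) + c(s−t) + ∫_{s−t}^{s+t} v(ζ) dζ ). Then a_±(s) = v(s) ± ċ(s) are unit vectors, γ_s(s,t) = (1/2)( a_+(s+t) − a_-(s−t) ) and γ_t(s,t) = (1/2)( a_+(s+t) + a_-(s−t) ), and for ALL (s,t) ∈ ℝ²: ⟨γ_s(s,t), γ_t(s,t)⟩ = 0 and |γ_s(s,t)|² + |γ_t(s,t)|² = 1. -/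

import Mathlib

noncomputable section
open Real Set Filter MeasureTheory
open scoped ContDiff ENNReal

/-- Euclidean inner product on ℝ². -/
def dot2 (a b : ℝ × ℝ) : ℝ := a.1 * b.1 + a.2 * b.2
/-- Squared Euclidean norm on ℝ². -/
def nsq (a : ℝ × ℝ) : ℝ := dot2 a a
/-- Euclidean norm on ℝ². -/
def enorm2 (a : ℝ × ℝ) : ℝ := Real.sqrt (nsq a)

/-- d'Alembert's formula: the evolution by isothermal gauge of initial data (c,v),
γ(s,t) = (1/2)(c(s+t) + c(s−t) + ∫_{s−t}^{s+t} v). -/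
def gammaIG (c v : ℝ → ℝ × ℝ) (p : ℝ × ℝ) : ℝ × ℝ :=
  (1 / 2 : ℝ) • (c (p.1 + p.2) + c (p.1 - p.2) + ∫ ζ in (p.1 - p.2)..(p.1 + p.2), v ζ)

/-- Partial derivative in s of a map ℝ² → ℝ². -/
def pds (γ : ℝ × ℝ → ℝ × ℝ) (p : ℝ × ℝ) : ℝ × ℝ := deriv (fun x => γ (x, p.2)) p.1
/-- Partial derivative in t of a map ℝ² → ℝ². -/
def pdt (γ : ℝ × ℝ → ℝ × ℝ) (p : ℝ × ℝ) : ℝ × ℝ := deriv (fun y => γ (p.1, y)) p.2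

/-- Spatial direction a₊ = v + ċ of the outgoing null tangent. -/
def aplus (c v : ℝ → ℝ × ℝ) (s : ℝ) : ℝ × ℝ := v s + deriv c s
/-- Spatial direction a₋ = v − ċ of the incoming null tangent. -/
def aminus (c v : ℝ → ℝ × ℝ) (s : ℝ) : ℝ × ℝ := v s - deriv c s

/-- The characteristic diamond D(s₁,s₂) = {(s,t) : s₁ + |t| ≤ s ≤ s₂ − |t|}. -/
def diamond (s₁ s₂ : ℝ) : Set (ℝ × ℝ) :=
  {p : ℝ × ℝ | s₁ + |p.2| ≤ p.1 ∧ p.1 ≤ s₂ - |p.2|}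

/-- Admissible C¹ × C⁰ initial data for the isothermal gauge:
⟨ċ,v⟩ = 0, |ċ|² + |v|² = 1 and |v| < 1. -/
structure IGData (c v : ℝ → ℝ × ℝ) : Prop where
  hc : ContDiff ℝ 1 c
  hv : Continuous v
  horth : ∀ s, dot2 (deriv c s) (v s) = 0
  hnorm : ∀ s, nsq (deriv c s) + nsq (v s) = 1
  hvlt : ∀ s, nsq (v s) < 1

/-- ϑ is a continuous lift of the unit tangent U₀ = ċ/|ċ| along c. -/
def IsTangentLift (c : ℝ → ℝ × ℝ) (ϑ : ℝ → ℝ) : Prop :=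
  Continuous ϑ ∧
    ∀ s, (enorm2 (deriv c s))⁻¹ • deriv c s = ((Real.cos (ϑ s), Real.sin (ϑ s)) : ℝ × ℝ)

/-! The d'Alembert formula is, in characteristic coordinates, a sum of a function of `s + t`
and a function of `s - t`, with derivatives `a₊ / 2` and `-a₋ / 2`. Hence `γ_s = (a₊ - a₋) / 2` and
`γ_t = (a₊ + a₋) / 2`, and both gauge conditions reduce to `|a₊| = |a₋| = 1`, which is the
constraint at `t = 0`. -/

theorem dot2_comm (a b : ℝ × ℝ) : dot2 a b = dot2 b a := by
  simp only [dot2]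
  ring

theorem nsq_add (a b : ℝ × ℝ) : nsq (a + b) = nsq a + 2 * dot2 a b + nsq b := by
  simp only [nsq, dot2, Prod.fst_add, Prod.snd_add]
  ring

theorem nsq_sub (a b : ℝ × ℝ) : nsq (a - b) = nsq a - 2 * dot2 a b + nsq b := by
  simp only [nsq, dot2, Prod.fst_sub, Prod.snd_sub]
  ring

theorem dot2_half_sub_half_add (a b : ℝ × ℝ) :
    dot2 ((1 / 2 : ℝ) • (a - b)) ((1 / 2 : ℝ) • (a + b)) = (nsq a - nsq b) / 4 := by
  simp only [nsq, dot2, Prod.smul_fst, Prod.smul_snd, Prod.fst_add, Prod.snd_add,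
    Prod.fst_sub, Prod.snd_sub, smul_eq_mul]
  ring

theorem nsq_half_sub_add_nsq_half_add (a b : ℝ × ℝ) :
    nsq ((1 / 2 : ℝ) • (a - b)) + nsq ((1 / 2 : ℝ) • (a + b)) = (nsq a + nsq b) / 2 := by
  simp only [nsq, dot2, Prod.smul_fst, Prod.smul_snd, Prod.fst_add, Prod.snd_add,
    Prod.fst_sub, Prod.snd_sub, smul_eq_mul]
  ring

section Constraints

variable {c v : ℝ → ℝ × ℝ}

theorem nsq_aplus (horth : ∀ s, dot2 (deriv c s) (v s) = 0)
    (hnorm : ∀ s, nsq (deriv c s) + nsq (v s) = 1) (s : ℝ) : nsq (aplus c v s) = 1 := by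
  rw [aplus, nsq_add, dot2_comm, horth, ← hnorm s]
  ring

theorem nsq_aminus (horth : ∀ s, dot2 (deriv c s) (v s) = 0)
    (hnorm : ∀ s, nsq (deriv c s) + nsq (v s) = 1) (s : ℝ) : nsq (aminus c v s) = 1 := by
  rw [aminus, nsq_sub, dot2_comm, horth, ← hnorm s]
  ring

end Constraints

theorem hasDerivAt_intervalIntegral_of_hasDerivAt {E : Type*} [NormedAddCommGroup E]
    [NormedSpace ℝ E] [CompleteSpace E] {v : ℝ → E} (hv : Continuous v) {u w : ℝ → ℝ}
    {u' w' x : ℝ} (hu : HasDerivAt u u' x) (hw : HasDerivAt w w' x) :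
    HasDerivAt (fun y => ∫ ζ in u y..w y, v ζ) (w' • v (w x) - u' • v (u x)) x := by
  have hprim : ∀ b, HasDerivAt (fun b => ∫ ζ in (0 : ℝ)..b, v ζ) (v b) b := fun b =>
    (hv.integral_hasStrictDerivAt 0 b).hasDerivAt
  refine ((hprim (w x)).scomp x hw |>.sub <| (hprim (u x)).scomp x hu).congr_of_eventuallyEq
    (Eventually.of_forall fun y => ?_)
  exact (intervalIntegral.integral_interval_sub_left (hv.intervalIntegrable _ _)
    (hv.intervalIntegrable _ _)).symm

section DAlembert

variable {c v : ℝ → ℝ × ℝ}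

-- `gammaIG c v (s, t)` in the characteristic coordinates `w = s + t`, `u = s - t`.
theorem hasDerivAt_dAlembert (hc : Differentiable ℝ c) (hv : Continuous v) {u w : ℝ → ℝ}
    {u' w' x : ℝ} (hu : HasDerivAt u u' x) (hw : HasDerivAt w w' x) :
    HasDerivAt (fun y => (1 / 2 : ℝ) • (c (w y) + c (u y) + ∫ ζ in u y..w y, v ζ))
      ((1 / 2 : ℝ) • (w' • aplus c v (w x) - u' • aminus c v (u x))) x := by
  have hcw := (hc (w x)).hasDerivAt.scomp x hw
  have hcu := (hc (u x)).hasDerivAt.scomp x hu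
  refine (((hcw.add hcu).add (hasDerivAt_intervalIntegral_of_hasDerivAt hv hu hw)).const_smul
    (1 / 2 : ℝ)).congr_deriv ?_
  simp only [aplus, aminus, smul_add, smul_sub]
  abel

theorem pds_gammaIG (hc : Differentiable ℝ c) (hv : Continuous v) (p : ℝ × ℝ) :
    pds (gammaIG c v) p = (1 / 2 : ℝ) • (aplus c v (p.1 + p.2) - aminus c v (p.1 - p.2)) := by
  have h := (hasDerivAt_dAlembert hc hv ((hasDerivAt_id p.1).sub_const p.2)
    ((hasDerivAt_id p.1).add_const p.2)).deriv
  simp only [one_smul] at h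
  exact h

theorem pdt_gammaIG (hc : Differentiable ℝ c) (hv : Continuous v) (p : ℝ × ℝ) :
    pdt (gammaIG c v) p = (1 / 2 : ℝ) • (aplus c v (p.1 + p.2) + aminus c v (p.1 - p.2)) := by
  have h := (hasDerivAt_dAlembert hc hv ((hasDerivAt_id p.2).const_sub p.1)
    ((hasDerivAt_id p.2).const_add p.1)).deriv
  simp only [one_smul, neg_smul, sub_neg_eq_add] at h
  exact h

end DAlembert

/-- **propagation of the isothermal gauge constraints.** For C¹ × C⁰
data satisfying the constraints at t = 0, the d'Alembert evolution satisfies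
γ_s = (a₊(s+t) − a₋(s−t))/2, γ_t = (a₊(s+t) + a₋(s−t))/2, and the gauge conditions
⟨γ_s,γ_t⟩ = 0 and |γ_s|² + |γ_t|² = 1 for all (s,t). -/
theorem gauge_constraints_propagate
    (c v : ℝ → ℝ × ℝ)
    (hc : ContDiff ℝ 1 c) (hv : Continuous v)
    (horth : ∀ s, dot2 (deriv c s) (v s) = 0)
    (hnorm : ∀ s, nsq (deriv c s) + nsq (v s) = 1) :
    (∀ s : ℝ, nsq (aplus c v s) = 1 ∧ nsq (aminus c v s) = 1) ∧
    (∀ p : ℝ × ℝ, pds (gammaIG c v) p =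
      (1 / 2 : ℝ) • (aplus c v (p.1 + p.2) - aminus c v (p.1 - p.2))) ∧
    (∀ p : ℝ × ℝ, pdt (gammaIG c v) p =
      (1 / 2 : ℝ) • (aplus c v (p.1 + p.2) + aminus c v (p.1 - p.2))) ∧
    (∀ p : ℝ × ℝ, dot2 (pds (gammaIG c v) p) (pdt (gammaIG c v) p) = 0) ∧
    (∀ p : ℝ × ℝ, nsq (pds (gammaIG c v) p) + nsq (pdt (gammaIG c v) p) = 1) := by
  have hcd : Differentiable ℝ c := hc.differentiable one_ne_zero
  refine ⟨fun s => ⟨nsq_aplus horth hnorm s, nsq_aminus horth hnorm s⟩, pds_gammaIG hcd hv,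
    pdt_gammaIG hcd hv, fun p => ?_, fun p => ?_⟩
  · rw [pds_gammaIG hcd hv, pdt_gammaIG hcd hv, dot2_half_sub_half_add, nsq_aplus horth hnorm,
      nsq_aminus horth hnorm]
    norm_num
  · rw [pds_gammaIG hcd hv, pdt_gammaIG hcd hv, nsq_half_sub_add_nsq_half_add,
      nsq_aplus horth hnorm, nsq_aminus horth hnorm]
    norm_num
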